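/- arXiv:2509.17326 — 4 statements merged into one kernel-verified Lean document; each statement's English description precedes it below -/
import Mathlib

section
/- Let K be a convex body in ℝ^n (n ≥ 3), H a hyperplane, and p an interior point of K. If for every hyperplane Π through p the section Π ∩ K has an (n−2)-plane of symmetry parallel to H, then K has a hyperplane of symmetry parallel to H. -/
noncomputable section

open Metric Set MeasureTheory

/-- Euclidean n-space. -/
abbrev Euc (n : ℕ) := EuclideanSpace ℝ (Fin n)

/-- A convex body: compact, convex, with nonempty interior. -/
def IsConvexBody {n : ℕ} (K : Set (Euc n)) : Prop :=
  IsCompact K ∧ Convex ℝ K ∧ (interior K).Nonempty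

/-- `f` is the (orthogonal) reflection of the space with fixed-point set the affine
subspace `A`: an involutive isometry whose fixed points are exactly `A`. -/
def IsReflectionFix {n : ℕ} (f : Euc n → Euc n) (A : AffineSubspace ℝ (Euc n)) : Prop :=
  Isometry f ∧ f ∘ f = id ∧ {x | f x = x} = (A : Set (Euc n))

/-- `A` is a plane of symmetry of the set `K`. -/
def IsSymmetryPlane {n : ℕ} (K : Set (Euc n)) (A : AffineSubspace ℝ (Euc n)) : Prop :=
  ∃ f : Euc n → Euc n, IsReflectionFix f A ∧ f '' K = K

/-- `L` is a plane of symmetry of the set `s` within the flat `P`: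
some involutive isometry of the ambient space preserves `P`, has exactly `L` as
fixed-point set inside `P`, and maps `s` onto itself. -/
def IsSymmPlaneOfIn {n : ℕ} (s : Set (Euc n)) (P L : AffineSubspace ℝ (Euc n)) : Prop :=
  L ≤ P ∧ ∃ f : Euc n → Euc n, Isometry f ∧ f ∘ f = id ∧
    f '' (P : Set (Euc n)) = (P : Set (Euc n)) ∧
    {x ∈ (P : Set (Euc n)) | f x = x} = (L : Set (Euc n)) ∧ f '' s = s

/-- `L` is a plane of symmetry of the section `P ∩ K` within the flat `P`. -/
def IsSectionSymmPlane {n : ℕ} (K : Set (Euc n)) (P L : AffineSubspace ℝ (Euc n)) : Prop :=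
  IsSymmPlaneOfIn ((P : Set (Euc n)) ∩ K) P L

/-- A hyperplane: a nonempty affine subspace whose direction has dimension `n - 1`. -/
def IsHyperplane {n : ℕ} (A : AffineSubspace ℝ (Euc n)) : Prop :=
  (A : Set (Euc n)).Nonempty ∧ Module.finrank ℝ A.direction = n - 1

/-- A rotation about the affine subspace `L`: an affine isometry fixing `L`
pointwise whose linear part has determinant one (orientation preserving). -/
def IsRotationAbout {n : ℕ} (f : Euc n ≃ᵃⁱ[ℝ] Euc n) (L : AffineSubspace ℝ (Euc n)) : Prop :=
  (∀ x ∈ L, f x = x) ∧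
    LinearMap.det (f.linearIsometryEquiv.toLinearEquiv : Euc n →ₗ[ℝ] Euc n) = 1

/-- A body of revolution with axis the line `L`. -/
def IsRevolutionBody {n : ℕ} (K : Set (Euc n)) (L : AffineSubspace ℝ (Euc n)) : Prop :=
  IsConvexBody K ∧ (L : Set (Euc n)).Nonempty ∧ Module.finrank ℝ L.direction = 1 ∧
    ∀ f : Euc n ≃ᵃⁱ[ℝ] Euc n, IsRotationAbout f L → f '' K = K

/-- A `k`-dimensional ellipsoid: affine image of a `k`-dimensional unit ball. -/
def IsEllipsoidOfDim {n : ℕ} (k : ℕ) (s : Set (Euc n)) : Prop :=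
  ∃ (T : Euc n ≃ᵃ[ℝ] Euc n) (V : Submodule ℝ (Euc n)), Module.finrank ℝ V = k ∧
    s = T '' (closedBall 0 1 ∩ (V : Set (Euc n)))

/-- The shadow boundary of `K` with respect to the direction submodule `D`:
the union of the touching sets of all supporting flats of `K` with direction `D`. -/
def shadowBoundary {n : ℕ} (K : Set (Euc n)) (D : Submodule ℝ (Euc n)) : Set (Euc n) :=
  ⋃ l ∈ {l : AffineSubspace ℝ (Euc n) | l.direction = D ∧
      ((l : Set (Euc n)) ∩ K).Nonempty ∧ (l : Set (Euc n)) ∩ interior K = ∅},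
    ((l : Set (Euc n)) ∩ K)

/-- `p` is a Larman point of `K`: every hyperplane section of `K` through `p` has
an `(n-2)`-plane of symmetry. -/
def IsLarmanPoint {n : ℕ} (K : Set (Euc n)) (p : Euc n) : Prop :=
  p ∈ interior K ∧ ∀ P : AffineSubspace ℝ (Euc n), IsHyperplane P → p ∈ P →
    ∃ L : AffineSubspace ℝ (Euc n), Module.finrank ℝ L.direction = n - 2 ∧
      IsSectionSymmPlane K P L

/-- `p` is a revolution point of `K`: every hyperplane section of `K` through `p` has
an `(n-2)`-plane of symmetry containing `p`. -/
def IsRevolutionPoint {n : ℕ} (K : Set (Euc n)) (p : Euc n) : Prop :=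
  p ∈ interior K ∧ ∀ P : AffineSubspace ℝ (Euc n), IsHyperplane P → p ∈ P →
    ∃ L : AffineSubspace ℝ (Euc n), Module.finrank ℝ L.direction = n - 2 ∧ p ∈ L ∧
      IsSectionSymmPlane K P L

/-! Let `u` be a unit normal of `H`. Since `n ≥ 3`, any `x ∈ K` lies on a hyperplane `P`
through `p` whose direction contains `u`. The symmetry of `P ∩ K` in an `(n-2)`-plane `L ⊥ u`
of `P` is then the reflection of `P` along `u` across a level set `⟪·, u⟫ = c_P`. In particular
the chord of `K` through `p` in direction `u` is symmetric about level `c_P`; a bounded set of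
reals has at most one centre of symmetry, so `c_P = c` does not depend on `P`. Hence the
reflection across `⟪·, u⟫ = c` maps every `x ∈ K` into `K`. -/

open Module
open scoped RealInnerProductSpace

lemma csInf_add_csSup_eq_of_forall_sub_mem {S : Set ℝ} (hne : S.Nonempty)
    (hS : Bornology.IsBounded S) {a : ℝ} (hsymm : ∀ t ∈ S, a - t ∈ S) :
    sInf S + sSup S = a := by
  have hsup : sSup S ≤ a - sInf S :=
    csSup_le hne fun t ht => by linarith [csInf_le hS.bddBelow (hsymm t ht)]
  have hinf : a - sSup S ≤ sInf S :=
    le_csInf hne fun t ht => by linarith [le_csSup hS.bddAbove (hsymm t ht)]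
  linarith

section InnerProductSpace

variable {E : Type*} [NormedAddCommGroup E] [InnerProductSpace ℝ E]

/-- For a unit vector `u`, the reflection across the hyperplane `⟪x, u⟫ = c`. -/
def levelReflection (u : E) (c : ℝ) (x : E) : E :=
  x + (2 * (c - ⟪x, u⟫)) • u

def levelHyperplane (u : E) (c : ℝ) : AffineSubspace ℝ E :=
  AffineSubspace.mk' (c • u) (ℝ ∙ u)ᗮ

variable {u : E} {c : ℝ}

lemma inner_add_smul_of_norm_eq_one (hu : ‖u‖ = 1) (x : E) (t : ℝ) :
    ⟪x + t • u, u⟫ = ⟪x, u⟫ + t := by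
  rw [inner_add_left, real_inner_smul_left, real_inner_self_eq_norm_sq, hu, one_pow, mul_one]

lemma levelReflection_add_smul (hu : ‖u‖ = 1) (x : E) (t : ℝ) :
    levelReflection u c (x + t • u) = x + (2 * (c - ⟪x, u⟫) - t) • u := by
  rw [levelReflection, inner_add_smul_of_norm_eq_one hu]
  module

lemma levelReflection_involutive (hu : ‖u‖ = 1) :
    Function.Involutive (levelReflection u c) := by
  intro x
  change levelReflection u c (x + _ • u) = x
  rw [levelReflection_add_smul hu]
  module

lemma isometry_levelReflection (hu : ‖u‖ = 1) : Isometry (levelReflection u c) := by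
  refine Isometry.of_dist_eq fun a b => ?_
  have hsub : levelReflection u c a - levelReflection u c b =
      (a - b) - (2 * ⟪a - b, u⟫) • u := by
    rw [levelReflection, levelReflection, inner_sub_left]
    module
  rw [dist_eq_norm, dist_eq_norm, hsub, ← sq_eq_sq₀ (norm_nonneg _) (norm_nonneg _),
    norm_sub_sq_real, real_inner_smul_right, norm_smul, Real.norm_eq_abs, hu, mul_one, sq_abs]
  ring

lemma mem_levelHyperplane (hu : ‖u‖ = 1) {x : E} :
    x ∈ levelHyperplane u c ↔ ⟪x, u⟫ = c := by
  rw [levelHyperplane, AffineSubspace.mem_mk', Submodule.mem_orthogonal_singleton_iff_inner_left,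
    vsub_eq_sub, inner_sub_left, real_inner_smul_left, real_inner_self_eq_norm_sq, hu, one_pow,
    mul_one, sub_eq_zero]

lemma levelReflection_eq_self_iff (hu : ‖u‖ = 1) {x : E} :
    levelReflection u c x = x ↔ x ∈ levelHyperplane u c := by
  have hu0 : u ≠ 0 := norm_ne_zero_iff.1 (by rw [hu]; exact one_ne_zero)
  rw [mem_levelHyperplane hu, levelReflection, add_eq_left, smul_eq_zero, or_iff_left hu0,
    mul_eq_zero, or_iff_right two_ne_zero, sub_eq_zero, eq_comm]

lemma isometry_add_smul (hu : ‖u‖ = 1) (x : E) : Isometry fun t : ℝ => x + t • u :=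
  Isometry.of_dist_eq fun s t => by
    rw [dist_add_left, dist_eq_norm, ← sub_smul, norm_smul, hu, mul_one, Real.dist_eq,
      Real.norm_eq_abs]

lemma Submodule.exists_le_finrank_add_one_eq [FiniteDimensional ℝ E] (W : Submodule ℝ E)
    (hW : finrank ℝ W < finrank ℝ E) :
    ∃ D : Submodule ℝ E, W ≤ D ∧ finrank ℝ D + 1 = finrank ℝ E := by
  have hWo : Wᗮ ≠ ⊥ := by
    intro h
    have := W.finrank_add_finrank_orthogonal
    rw [h, finrank_bot] at this
    omega
  obtain ⟨z, hzW, hz0⟩ := Wᗮ.ne_bot_iff.1 hWo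
  refine ⟨(ℝ ∙ z)ᗮ, W.le_orthogonal_orthogonal.trans
    (Submodule.orthogonal_le ((Submodule.span_singleton_le_iff_mem z _).2 hzW)), ?_⟩
  have := (ℝ ∙ z).finrank_add_finrank_orthogonal
  rw [finrank_span_singleton hz0] at this
  omega

lemma Submodule.exists_norm_eq_one_eq_orthogonal_span_singleton [FiniteDimensional ℝ E]
    (V : Submodule ℝ E) (hV : finrank ℝ V + 1 = finrank ℝ E) :
    ∃ u : E, ‖u‖ = 1 ∧ V = (ℝ ∙ u)ᗮ := by
  have hrank : finrank ℝ Vᗮ = 1 := by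
    have := V.finrank_add_finrank_orthogonal
    omega
  obtain ⟨v, hvV, hv0⟩ := Vᗮ.ne_bot_iff.1 (Submodule.one_le_finrank_iff.1 hrank.ge)
  refine ⟨(‖v‖⁻¹ : ℝ) • v, norm_smul_inv_norm hv0, ?_⟩
  rw [← eq_span_singleton_of_mem_of_finrank_eq_one hrank (Vᗮ.smul_mem _ hvV)
    (smul_ne_zero (inv_ne_zero (norm_ne_zero_iff.2 hv0)) hv0), V.orthogonal_orthogonal]

lemma Submodule.orthogonal_inf_eq_span_singleton {W V : Submodule ℝ E} [FiniteDimensional ℝ V]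
    (hWV : W ≤ V) (hrank : finrank ℝ W + 1 = finrank ℝ V) (hu : u ∈ Wᗮ ⊓ V) (hu0 : u ≠ 0) :
    Wᗮ ⊓ V = ℝ ∙ u :=
  eq_span_singleton_of_mem_of_finrank_eq_one
    (Submodule.finrank_add_inf_finrank_orthogonal' hWV hrank) hu hu0

lemma Isometry.sub_mem_orthogonal_direction {f : E → E} (hf : Isometry f)
    {L : AffineSubspace ℝ E} (hfix : ∀ y ∈ L, f y = y) (x : E) : f x - x ∈ L.directionᗮ := by
  have hL : L ≤ AffineSubspace.perpBisector x (f x) := fun y hy => by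
    rw [AffineSubspace.mem_perpBisector_iff_dist_eq, ← hf.dist_eq, hfix y hy]
  intro w hw
  simpa [Submodule.mem_orthogonal_singleton_iff_inner_left] using
    AffineSubspace.direction_le hL hw

theorem apply_eq_levelReflection {P L : AffineSubspace ℝ E} [FiniteDimensional ℝ P.direction]
    {f : E → E} (hf : Isometry f) (hfP : MapsTo f P P)
    (hfix : {x ∈ (P : Set E) | f x = x} = L) (hLP : L ≤ P)
    (hrank : finrank ℝ L.direction + 1 = finrank ℝ P.direction)
    (hu : ‖u‖ = 1) (huP : u ∈ P.direction) (huL : u ∈ L.directionᗮ)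
    {q : E} (hq : q ∈ L) {x : E} (hx : x ∈ P) :
    f x = levelReflection u ⟪q, u⟫ x := by
  -- `f x - x` is orthogonal to `L` and parallel to `P`, hence a multiple `r • u`; since `f`
  -- fixes `q`, `r` solves `‖x - q + r • u‖ = ‖x - q‖`, whose root `r = 0` only occurs when
  -- `x ∈ L`.
  have hu0 : u ≠ 0 := norm_ne_zero_iff.1 (by rw [hu]; exact one_ne_zero)
  have hfixL : ∀ y ∈ L, f y = y := fun y hy => by
    rw [← SetLike.mem_coe, ← hfix] at hy
    exact hy.2
  have hdisp : f x - x ∈ L.directionᗮ ⊓ P.direction :=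
    ⟨hf.sub_mem_orthogonal_direction hfixL x, AffineSubspace.vsub_mem_direction (hfP hx) hx⟩
  rw [Submodule.orthogonal_inf_eq_span_singleton (AffineSubspace.direction_le hLP) hrank
    ⟨huL, huP⟩ hu0] at hdisp
  obtain ⟨r, hr⟩ := Submodule.mem_span_singleton.1 hdisp
  have hfx : f x = x + r • u := by rw [hr]; abel
  have hdist : ‖(x - q) + r • u‖ = ‖x - q‖ := by
    rw [show x - q + r • u = f x - f q by rw [hfx, hfixL q hq]; abel, ← dist_eq_norm,
      hf.dist_eq, dist_eq_norm]
  have hr : r * (r + 2 * ⟪x - q, u⟫) = 0 := by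
    have := congrArg (· ^ 2) hdist
    simp only [norm_add_sq_real, real_inner_smul_right, norm_smul, Real.norm_eq_abs, hu,
      mul_one, sq_abs] at this
    nlinarith
  have hxq : ⟪x - q, u⟫ = ⟪x, u⟫ - ⟪q, u⟫ := inner_sub_left x q u
  have hr_eq : r = 2 * (⟪q, u⟫ - ⟪x, u⟫) := by
    rcases mul_eq_zero.1 hr with hr0 | hr
    · have hxL : x ∈ L := by
        rw [← SetLike.mem_coe, ← hfix]
        exact ⟨hx, by rw [hfx, hr0, zero_smul, add_zero]⟩
      have : ⟪x - q, u⟫ = 0 := by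
        rw [real_inner_comm]
        exact (Submodule.mem_orthogonal' _ _).1 huL _ (AffineSubspace.vsub_mem_direction hxL hq)
      linarith
    · linarith
  rw [hfx, levelReflection, hr_eq]

end InnerProductSpace

lemma exists_isHyperplane_mem_mem_direction {n : ℕ} (hn : 3 ≤ n) (p x u : Euc n) :
    ∃ P : AffineSubspace ℝ (Euc n), IsHyperplane P ∧ p ∈ P ∧ x ∈ P ∧ u ∈ P.direction := by
  have hW : finrank ℝ ((ℝ ∙ u) ⊔ (ℝ ∙ (x - p)) : Submodule ℝ (Euc n)) < finrank ℝ (Euc n) := by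
    have hline (v : Euc n) : finrank ℝ (ℝ ∙ v) ≤ 1 := by
      simpa using finrank_span_le_card ({v} : Set (Euc n))
    have := Submodule.finrank_add_le_finrank_add_finrank (ℝ ∙ u) (ℝ ∙ (x - p))
    rw [finrank_euclideanSpace_fin]
    linarith [hline u, hline (x - p)]
  obtain ⟨D, hWD, hD⟩ := Submodule.exists_le_finrank_add_one_eq _ hW
  refine ⟨AffineSubspace.mk' p D, ⟨⟨p, AffineSubspace.self_mem_mk' p D⟩, ?_⟩,
    AffineSubspace.self_mem_mk' p D,
    hWD (Submodule.mem_sup_right (Submodule.mem_span_singleton_self _)), ?_⟩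
  · rw [AffineSubspace.direction_mk', finrank_euclideanSpace_fin] at *
    omega
  · rw [AffineSubspace.direction_mk']
    exact hWD (Submodule.mem_sup_left (Submodule.mem_span_singleton_self _))

lemma IsSectionSymmPlane.exists_mapsTo_levelReflection {n : ℕ} {K : Set (Euc n)}
    {P L : AffineSubspace ℝ (Euc n)} (h : IsSectionSymmPlane K P L)
    (hrank : finrank ℝ L.direction + 1 = finrank ℝ P.direction)
    (hL : (L : Set (Euc n)).Nonempty) {u : Euc n} (hu : ‖u‖ = 1) (huP : u ∈ P.direction)
    (huL : u ∈ L.directionᗮ) :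
    ∃ c, MapsTo (levelReflection u c) (P ∩ K) K := by
  obtain ⟨hLP, f, hf, -, hfP, hfix, hfK⟩ := h
  obtain ⟨q, hq⟩ := hL
  refine ⟨⟪q, u⟫, fun y hy => ?_⟩
  rw [← apply_eq_levelReflection hf (fun y hy => hfP ▸ mem_image_of_mem f hy) hfix hLP hrank
    hu huP huL hq hy.1]
  exact (hfK ▸ mem_image_of_mem f hy).2

theorem exists_mapsTo_levelReflection {n : ℕ} (hn : 3 ≤ n) {K : Set (Euc n)}
    (hK : Bornology.IsBounded K) {p : Euc n} (hp : p ∈ K) {u : Euc n} (hu : ‖u‖ = 1)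
    (hsec : ∀ P : AffineSubspace ℝ (Euc n), IsHyperplane P → p ∈ P →
      ∃ L : AffineSubspace ℝ (Euc n), finrank ℝ L.direction = n - 2 ∧
        L.direction ≤ (ℝ ∙ u)ᗮ ∧ IsSectionSymmPlane K P L) :
    ∃ c, MapsTo (levelReflection u c) K K := by
  set T := {t : ℝ | p + t • u ∈ K}
  refine ⟨(sInf T + sSup T) / 2 + ⟪p, u⟫, fun x hx => ?_⟩
  obtain ⟨P, hP, hpP, hxP, huP⟩ := exists_isHyperplane_mem_mem_direction hn p x u
  obtain ⟨L, hLrank, hLu, hL⟩ := hsec P hP hpP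
  have hLne : (L : Set (Euc n)).Nonempty := by
    rw [AffineSubspace.nonempty_iff_ne_bot]
    rintro rfl
    rw [AffineSubspace.direction_bot, finrank_bot] at hLrank
    omega
  have huL : u ∈ L.directionᗮ := Submodule.orthogonal_le hLu
    (Submodule.le_orthogonal_orthogonal _ (Submodule.mem_span_singleton_self u))
  obtain ⟨c, hc⟩ :=
    hL.exists_mapsTo_levelReflection (by rw [hLrank, hP.2]; omega) hLne hu huP huL
  have hT : ∀ t ∈ T, 2 * (c - ⟪p, u⟫) - t ∈ T := fun t ht => by
    have hptP : p + t • u ∈ P := by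
      simpa [vadd_eq_add, add_comm] using
        AffineSubspace.vadd_mem_of_mem_direction (P.direction.smul_mem t huP) hpP
    show p + _ • u ∈ K
    rw [← levelReflection_add_smul hu]
    exact hc ⟨hptP, ht⟩
  have hTbdd : Bornology.IsBounded T :=
    (isometry_add_smul hu p).antilipschitz.isBounded_preimage hK
  have hcenter := csInf_add_csSup_eq_of_forall_sub_mem ⟨0, by simpa [T] using hp⟩ hTbdd hT
  rw [show (sInf T + sSup T) / 2 + ⟪p, u⟫ = c by linarith]
  exact hc ⟨hxP, hx⟩

lemma isSymmetryPlane_levelHyperplane {n : ℕ} {K : Set (Euc n)} {u : Euc n} (hu : ‖u‖ = 1)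
    {c : ℝ} (hK : MapsTo (levelReflection u c) K K) : IsSymmetryPlane K (levelHyperplane u c) :=
  ⟨levelReflection u c, ⟨isometry_levelReflection hu, (levelReflection_involutive hu).comp_self,
    Set.ext fun _ => levelReflection_eq_self_iff hu⟩,
    hK.image_subset.antisymm fun x hx => ⟨_, hK hx, levelReflection_involutive hu x⟩⟩

/-- If every hyperplane section of `K` through the interior point `p`
has an `(n-2)`-plane of symmetry parallel to `H`, then `K` has a hyperplane of
symmetry parallel to `H`. -/
theorem stmt0 {n : ℕ} (hn : 3 ≤ n) (K : Set (Euc n)) (hK : IsConvexBody K)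
    (H : AffineSubspace ℝ (Euc n)) (hH : IsHyperplane H)
    (p : Euc n) (hp : p ∈ interior K)
    (hsec : ∀ P : AffineSubspace ℝ (Euc n), IsHyperplane P → p ∈ P →
      ∃ L : AffineSubspace ℝ (Euc n), Module.finrank ℝ L.direction = n - 2 ∧
        L.direction ≤ H.direction ∧ IsSectionSymmPlane K P L) :
    ∃ H' : AffineSubspace ℝ (Euc n), IsHyperplane H' ∧ H'.direction = H.direction ∧
      IsSymmetryPlane K H' := by
  obtain ⟨u, hu, hHu⟩ := H.direction.exists_norm_eq_one_eq_orthogonal_span_singleton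
    (by rw [hH.2, finrank_euclideanSpace_fin]; omega)
  rw [hHu] at hsec
  obtain ⟨c, hc⟩ := exists_mapsTo_levelReflection hn hK.1.isBounded (interior_subset hp) hu hsec
  refine ⟨levelHyperplane u c, ⟨⟨c • u, AffineSubspace.self_mem_mk' _ _⟩, ?_⟩, ?_,
    isSymmetryPlane_levelHyperplane hu hc⟩
  · rw [levelHyperplane, AffineSubspace.direction_mk', ← hHu, hH.2]
  · rw [levelHyperplane, AffineSubspace.direction_mk', hHu]
end
end

section
/- Let K ⊂ ℝ^n (n ≥ 4) be a convex body such that every orthogonal projection of K onto a hyperplane perpendicular to a fixed hyperplane H is an ellipsoid, and every section of K by a hyperplane parallel to H meeting its interior is an ellipsoid. Then the boundary of K contains no line segment. -/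
noncomputable section

open Metric Set MeasureTheory

/-!
Let `z` be the midpoint of a segment `[x, y]` in `∂K` and `f` a linear functional with
`f < f z` on `int K`. As `n ≥ 4`, the subspace `H.direction ∩ ker f` has dimension at least `2`,
so it contains a direction `v` not parallel to `y - x`. The orthogonal projection `π` along `v` maps
`K` onto an `(n-1)`-ellipsoid in which `π x ≠ π y`; by strict convexity of the ellipsoid, `π z` is
a relative interior point of `π K = closure (π (int K))`, hence `π z = π k` for some `k ∈ int K`.
Then `k - z ∥ v`, so `f k = f z`, a contradiction.
-/

open Module

section AffineImageOfBall

variable {E : Type*} [NormedAddCommGroup E] [NormedSpace ℝ E]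

theorem AffineEquiv.midpoint_mem_image_ball_inter [StrictConvexSpace ℝ E] (T : E ≃ᵃ[ℝ] E)
    (V : Submodule ℝ E) {a b : E} (ha : a ∈ T '' (closedBall 0 1 ∩ V))
    (hb : b ∈ T '' (closedBall 0 1 ∩ V)) (hab : a ≠ b) :
    midpoint ℝ a b ∈ T '' (ball 0 1 ∩ V) := by
  obtain ⟨a', ⟨ha'1, ha'V⟩, rfl⟩ := ha
  obtain ⟨b', ⟨hb'1, hb'V⟩, rfl⟩ := hb
  have hne : a' ≠ b' := by rintro rfl; exact hab rfl
  refine ⟨midpoint ℝ a' b', ⟨?_, ?_⟩, T.map_midpoint a' b'⟩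
  · rw [← interior_closedBall (0 : E) one_ne_zero]
    exact (strictConvex_closedBall ℝ (0 : E) 1).openSegment_subset ha'1 hb'1 hne
      (midpoint_mem_openSegment a' b')
  · rw [SetLike.mem_coe, midpoint_eq_smul_add]
    exact V.smul_mem _ (V.add_mem ha'V hb'V)

theorem AffineEquiv.symm_mem_of_image_closedBall_inter_subset [FiniteDimensional ℝ E]
    (T : E ≃ᵃ[ℝ] E) {V W : Submodule ℝ E} (hVW : finrank ℝ V = finrank ℝ W)
    (hsub : T '' (closedBall 0 1 ∩ V) ⊆ W) {w : E} (hw : w ∈ W) : T.symm w ∈ V := by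
  have hT0 : T 0 ∈ W := hsub ⟨0, ⟨by simp, V.zero_mem⟩, rfl⟩
  have hlinear : ∀ p, T.linear p = T p - T 0 := fun p => by
    simpa using T.toAffineMap.linearMap_vsub p 0
  have hmap : V.map (T.linear : E →ₗ[ℝ] E) = W := by
    refine Submodule.eq_of_le_of_finrank_eq ?_ (by rw [LinearEquiv.finrank_map_eq, hVW])
    rintro _ ⟨p, hp, rfl⟩
    have ht : (0 : ℝ) < (1 + ‖p‖)⁻¹ := by positivity
    have htp : (1 + ‖p‖)⁻¹ • p ∈ closedBall (0 : E) 1 := by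
      rw [mem_closedBall_zero_iff, norm_smul, Real.norm_of_nonneg ht.le,
        inv_mul_le_iff₀ (by positivity)]
      linarith
    have hmem : T.linear ((1 + ‖p‖)⁻¹ • p) ∈ W := by
      rw [hlinear]
      exact W.sub_mem (hsub ⟨_, ⟨htp, V.smul_mem _ hp⟩, rfl⟩) hT0
    rw [LinearEquiv.map_smul] at hmem
    exact (W.smul_mem_iff ht.ne').1 hmem
  obtain ⟨p, hp, hpw⟩ : w - T 0 ∈ V.map (T.linear : E →ₗ[ℝ] E) := hmap ▸ W.sub_mem hw hT0
  have hTp : T p = w := by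
    simp only [LinearEquiv.coe_coe, hlinear] at hpw
    exact sub_left_inj.1 hpw
  rw [← hTp, T.symm_apply_apply]
  exact hp

theorem AffineEquiv.mem_interior_of_image_ball_inter [FiniteDimensional ℝ E] (T : E ≃ᵃ[ℝ] E)
    {V W : Submodule ℝ E} (hVW : finrank ℝ V = finrank ℝ W) {S : Set W}
    (hS : (↑) '' S = T '' (closedBall 0 1 ∩ V)) {m : W} (hm : (m : E) ∈ T '' (ball 0 1 ∩ V)) :
    m ∈ interior S := by
  have hsub : T '' (closedBall 0 1 ∩ V) ⊆ W := by
    rw [← hS]; rintro _ ⟨w, -, rfl⟩; exact w.2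
  have hcont : Continuous fun w : W => T.symm w :=
    T.symm.continuous_of_finiteDimensional.comp continuous_subtype_val
  refine mem_interior.2 ⟨(fun w : W => T.symm w) ⁻¹' ball 0 1, fun w hw => ?_,
    isOpen_ball.preimage hcont, ?_⟩
  · have hwS : (w : E) ∈ (↑) '' S := by
      rw [hS]
      exact ⟨T.symm w, ⟨ball_subset_closedBall hw,
        T.symm_mem_of_image_closedBall_inter_subset hVW hsub w.2⟩, T.apply_symm_apply w⟩
    obtain ⟨w', hw', hww'⟩ := hwS
    rwa [← Subtype.ext hww']
  · obtain ⟨m', ⟨hm', -⟩, hm'm⟩ := hm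
    simpa [← hm'm] using hm'

end AffineImageOfBall

theorem Convex.interior_image_subset_image_interior {E F : Type*} [NormedAddCommGroup E]
    [NormedSpace ℝ E] [CompleteSpace E] [NormedAddCommGroup F] [NormedSpace ℝ F] [CompleteSpace F]
    {K : Set E} (hK : Convex ℝ K) (hKint : (interior K).Nonempty) {g : E →L[ℝ] F}
    (hg : Function.Surjective g) : interior (g '' K) ⊆ g '' interior K := by
  have hopen : IsOpen (g '' interior K) := g.isOpenMap hg _ isOpen_interior
  have hconv : Convex ℝ (g '' interior K) := hK.interior.linear_image (g : E →ₗ[ℝ] F)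
  have hcl : g '' K ⊆ closure (g '' interior K) := by
    calc g '' K ⊆ g '' closure (interior K) := by
          rw [hK.closure_interior_eq_closure_of_nonempty_interior hKint]
          exact image_mono subset_closure
      _ ⊆ closure (g '' interior K) := image_closure_subset_closure_image g.continuous
  calc interior (g '' K) ⊆ interior (closure (g '' interior K)) := interior_mono hcl
    _ = g '' interior K := by
      rw [hconv.interior_closure_eq_interior_of_nonempty_interior
        (by rw [hopen.interior_eq]; exact hKint.image g), hopen.interior_eq]

theorem Submodule.finrank_le_finrank_inf_ker_add_one {𝕜 E : Type*} [Field 𝕜] [AddCommGroup E]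
    [Module 𝕜 E] [FiniteDimensional 𝕜 E] (A : Submodule 𝕜 E) (f : E →ₗ[𝕜] 𝕜) :
    finrank 𝕜 A ≤ finrank 𝕜 ↥(A ⊓ LinearMap.ker f) + 1 := by
  have hsup := A.finrank_sup_add_finrank_inf_eq (LinearMap.ker f)
  have hsupE := (A ⊔ LinearMap.ker f).finrank_le
  have hrange := (LinearMap.range f).finrank_le
  have hker := f.finrank_range_add_finrank_ker
  rw [finrank_self] at hrange
  omega

theorem exists_ne_zero_notMem_span_singleton {𝕜 E : Type*} [Field 𝕜] [AddCommGroup E]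
    [Module 𝕜 E] [FiniteDimensional 𝕜 E] {S : Submodule 𝕜 E} (hS : 2 ≤ finrank 𝕜 S) {d : E}
    (hd : d ≠ 0) : ∃ v ∈ S, v ≠ 0 ∧ d ∉ 𝕜 ∙ v := by
  obtain ⟨v, hvS, hvd⟩ : ∃ v ∈ S, v ∉ 𝕜 ∙ d := by
    by_contra! h
    have := Submodule.finrank_mono (show S ≤ 𝕜 ∙ d from h)
    rw [finrank_span_singleton hd] at this
    omega
  refine ⟨v, hvS, ?_, fun hdv => hvd ?_⟩
  · rintro rfl
    exact hvd (zero_mem _)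
  · obtain ⟨t, rfl⟩ := Submodule.mem_span_singleton.1 hdv
    have ht : t ≠ 0 := by rintro rfl; simp at hd
    exact Submodule.mem_span_singleton.2 ⟨t⁻¹, by rw [smul_smul, inv_mul_cancel₀ ht, one_smul]⟩

theorem Convex.exists_mem_interior_sub_midpoint_mem_orthogonal {E : Type*}
    [NormedAddCommGroup E] [InnerProductSpace ℝ E] [FiniteDimensional ℝ E] {K : Set E}
    (hK : Convex ℝ K) (hKint : (interior K).Nonempty) (W : Submodule ℝ E) (T : E ≃ᵃ[ℝ] E)
    {V : Submodule ℝ E} (hVW : finrank ℝ V = finrank ℝ W)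
    (hKT : (fun x => (W.orthogonalProjectionOnto x : E)) '' K = T '' (closedBall 0 1 ∩ V))
    {x y : E} (hx : x ∈ K) (hy : y ∈ K) (hxy : x - y ∉ Wᗮ) :
    ∃ k ∈ interior K, k - midpoint ℝ x y ∈ Wᗮ := by
  set π := W.orthogonalProjectionOnto
  have hS : (↑) '' (π '' K) = T '' (closedBall 0 1 ∩ V) := by rw [image_image]; exact hKT
  have hmem : ∀ p ∈ K, (π p : E) ∈ T '' (closedBall 0 1 ∩ V) := fun p hp =>
    hS ▸ ⟨π p, ⟨p, hp, rfl⟩, rfl⟩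
  have hne : (π x : E) ≠ π y := fun h => hxy <| by
    rw [← Submodule.orthogonalProjectionOnto_eq_zero_iff, map_sub, Subtype.ext h, sub_self]
  have hmid : (π (midpoint ℝ x y) : E) = midpoint ℝ (π x : E) (π y) := by
    simp only [midpoint_eq_smul_add, map_smul, map_add, Submodule.coe_smul, Submodule.coe_add]
  have hsurj : Function.Surjective π := fun w =>
    ⟨w, Submodule.orthogonalProjectionOnto_mem_subspace_eq_self w⟩
  obtain ⟨k, hk, hkz⟩ := hK.interior_image_subset_image_interior hKint hsurj <|
    T.mem_interior_of_image_ball_inter hVW hS <|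
      hmid ▸ T.midpoint_mem_image_ball_inter V (hmem x hx) (hmem y hy) hne
  refine ⟨k, hk, ?_⟩
  rw [← Submodule.orthogonalProjectionOnto_eq_zero_iff, map_sub, hkz, sub_self]

theorem stmt7_general {n : ℕ} (hn : 4 ≤ n) (K : Set (Euc n)) (hK : IsConvexBody K)
    (H : AffineSubspace ℝ (Euc n)) (hH : IsHyperplane H)
    (hproj : ∀ W : Submodule ℝ (Euc n), Module.finrank ℝ W = n - 1 → Wᗮ ≤ H.direction →
      IsEllipsoidOfDim (n - 1) ((fun x => (W.orthogonalProjectionOnto x : Euc n)) '' K)) :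
    ∀ x y : Euc n, x ≠ y → ¬ segment ℝ x y ⊆ frontier K := by
  obtain ⟨hKcompact, hKconv, hKint⟩ := hK
  intro x y hxy hseg
  have hsegK : segment ℝ x y ⊆ K := hseg.trans hKcompact.isClosed.frontier_subset
  obtain ⟨f, hf⟩ := geometric_hahn_banach_open_point hKconv.interior isOpen_interior
    (hseg (midpoint_mem_segment x y)).2
  have hker : 2 ≤ finrank ℝ ↥(H.direction ⊓ LinearMap.ker (f : Euc n →ₗ[ℝ] ℝ)) := by
    have := H.direction.finrank_le_finrank_inf_ker_add_one (f : Euc n →ₗ[ℝ] ℝ)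
    rw [hH.2] at this
    omega
  obtain ⟨v, hv, hv0, hxyv⟩ := exists_ne_zero_notMem_span_singleton hker (sub_ne_zero.2 hxy)
  have hvH := (Submodule.span_singleton_le_iff_mem _ _).2 (Submodule.mem_inf.1 hv).1
  have hvf := (Submodule.span_singleton_le_iff_mem _ _).2 (Submodule.mem_inf.1 hv).2
  have hWrank : finrank ℝ ↥(ℝ ∙ v)ᗮ = n - 1 := by
    have := (ℝ ∙ v).finrank_add_finrank_orthogonal
    rw [finrank_span_singleton hv0, finrank_euclideanSpace_fin] at this
    omega
  set W := (ℝ ∙ v)ᗮ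
  have hWperp : Wᗮ = ℝ ∙ v := Submodule.orthogonal_orthogonal _
  obtain ⟨T, V, hV, hKT⟩ := hproj W hWrank (hWperp ▸ hvH)
  obtain ⟨k, hk, hkz⟩ := hKconv.exists_mem_interior_sub_midpoint_mem_orthogonal hKint W T
    (hV.trans hWrank.symm) hKT (hsegK (left_mem_segment ..)) (hsegK (right_mem_segment ..))
    (hWperp ▸ hxyv)
  have hfk : f (k - midpoint ℝ x y) = 0 := hvf (hWperp ▸ hkz)
  rw [map_sub, sub_eq_zero] at hfk
  exact (hf k hk).ne hfk

/-- If every projection of `K` onto a hyperplane perpendicular to `H`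
is an ellipsoid and every section of `K` by a hyperplane parallel to `H` meeting
the interior is an ellipsoid, then `bd K` contains no segment. -/
theorem stmt7 {n : ℕ} (hn : 4 ≤ n) (K : Set (Euc n)) (hK : IsConvexBody K)
    (H : AffineSubspace ℝ (Euc n)) (hH : IsHyperplane H)
    (hproj : ∀ W : Submodule ℝ (Euc n), Module.finrank ℝ W = n - 1 → Wᗮ ≤ H.direction →
      IsEllipsoidOfDim (n - 1) ((fun x => (W.orthogonalProjectionOnto x : Euc n)) '' K))
    (hsec : ∀ P : AffineSubspace ℝ (Euc n), P.direction = H.direction →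
      ((P : Set (Euc n)) ∩ interior K).Nonempty →
      IsEllipsoidOfDim (n - 1) ((P : Set (Euc n)) ∩ K)) :
    ∀ x y : Euc n, x ≠ y → ¬ segment ℝ x y ⊆ frontier K :=
  stmt7_general hn K hK H hH hproj
end
end

section
/- Let K ⊂ ℝ^n (n ≥ 4) be a convex body, H a hyperplane, p an interior point of K such that for every hyperplane Π through p the section Π ∩ K has an (n−2)-plane of symmetry parallel to H. Let W be any hyperplane orthogonal to H and π the orthogonal projection onto W. Then for every (n−2)-plane Γ ⊂ W not parallel to H with π(p) ∈ Γ, the section Γ ∩ π(K) has an (n−3)-plane of symmetry parallel to W ∩ H. -/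
noncomputable section

open Metric Set MeasureTheory

/-
Let `Δ = π⁻¹(Γ)`, a hyperplane through `p` whose direction contains `Wᗮ`. Its plane of symmetry `L`
has direction `H.direction ⊓ Δ.direction` for dimension reasons, so it contains `Wᗮ` as well, and
the reflection `f` of `Δ ∩ K` (affine by Mazur–Ulam) fixes `Wᗮ` pointwise. An involutive isometry
fixing the normal line of `W` maps `W` to itself and commutes with `π`; hence `f` preserves
`Γ = Δ ∩ W` and `Γ ∩ π(K) = π(Δ ∩ K)`, with fixed points `Γ ∩ L`, an `(n-3)`-plane.
-/

open AffineSubspace Submodule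

theorem Function.Involutive.image_eq_self_of_mapsTo {α : Type*} {f : α → α} {s : Set α}
    (hf : Function.Involutive f) (h : MapsTo f s s) : f '' s = s :=
  h.image_subset.antisymm fun x hx => ⟨f x, h hx, hf x⟩

namespace Submodule

variable {E : Type*} [NormedAddCommGroup E] [InnerProductSpace ℝ E]

theorem mem_sup_orthogonal_iff {V W : Submodule ℝ E} [W.HasOrthogonalProjection] (hVW : V ≤ W)
    {v : E} : v ∈ V ⊔ Wᗮ ↔ W.starProjection v ∈ V := by
  constructor
  · intro hv
    obtain ⟨a, ha, b, hb, rfl⟩ := mem_sup.mp hv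
    rwa [map_add, starProjection_eq_self_iff.mpr (hVW ha),
      W.starProjection_apply_eq_zero_iff.mpr hb, add_zero]
  · exact fun hv =>
      mem_sup.mpr ⟨_, hv, _, W.sub_starProjection_mem_orthogonal v, add_sub_cancel _ _⟩

theorem finrank_sup_orthogonal [FiniteDimensional ℝ E] {V W : Submodule ℝ E} (hVW : V ≤ W) :
    Module.finrank ℝ ↥(V ⊔ Wᗮ) = Module.finrank ℝ V + Module.finrank ℝ Wᗮ := by
  have hdisj : V ⊓ Wᗮ = ⊥ :=
    eq_bot_iff.mpr <| (inf_le_inf_right _ hVW).trans W.inf_orthogonal_eq_bot.le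
  have h := finrank_sup_add_finrank_inf_eq V Wᗮ
  rw [hdisj, finrank_bot, add_zero] at h
  exact h

end Submodule

theorem Submodule.eq_inf_of_le_of_finrank_le {K V : Type*} [DivisionRing K] [AddCommGroup V]
    [Module K V] [FiniteDimensional K V] {L H D : Submodule K V} (hL : L ≤ H ⊓ D) (hD : ¬ D ≤ H)
    (hdim : Module.finrank K D ≤ Module.finrank K L + 1) : L = H ⊓ D := by
  refine eq_of_le_of_finrank_le hL ?_
  have := finrank_lt_finrank_of_lt <|
    inf_le_right.lt_of_ne fun h : H ⊓ D = D => hD (h ▸ inf_le_left)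
  omega

namespace AffineSubspace

variable {E : Type*} [NormedAddCommGroup E] [InnerProductSpace ℝ E]

theorem direction_le_of_subset_submodule {Γ : AffineSubspace ℝ E} {W : Submodule ℝ E}
    (hΓW : (Γ : Set E) ⊆ W) : Γ.direction ≤ W := by
  simpa using direction_le (s₂ := W.toAffineSubspace) hΓW

theorem mem_mk'_sup_orthogonal_iff {Γ : AffineSubspace ℝ E} {W : Submodule ℝ E}
    [W.HasOrthogonalProjection] (hΓW : Γ.direction ≤ W) {p : E} (hp : W.starProjection p ∈ Γ)
    {x : E} : x ∈ mk' p (Γ.direction ⊔ Wᗮ) ↔ W.starProjection x ∈ Γ := by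
  rw [mem_mk', Submodule.mem_sup_orthogonal_iff hΓW, vsub_eq_sub, map_sub,
    ← vsub_eq_sub, vsub_right_mem_direction_iff_mem hp]

theorem starProjection_mem_of_orthogonal_le_direction {L : AffineSubspace ℝ E}
    {W : Submodule ℝ E} [W.HasOrthogonalProjection] (hWL : Wᗮ ≤ L.direction) {x : E}
    (hx : x ∈ L) : W.starProjection x ∈ L := by
  have h := vadd_mem_of_mem_direction (hWL (neg_mem (W.sub_starProjection_mem_orthogonal x))) hx
  rwa [vadd_eq_add, neg_sub, sub_add_cancel] at h

end AffineSubspace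

namespace AffineIsometryEquiv

theorem linearIsometryEquiv_apply_eq_self_of_mem_direction {𝕜 V P : Type*} [NormedField 𝕜]
    [SeminormedAddCommGroup V] [NormedSpace 𝕜 V] [PseudoMetricSpace P] [NormedAddTorsor V P]
    (F : P ≃ᵃⁱ[𝕜] P)
    {L : AffineSubspace 𝕜 P} (hL : ∀ x ∈ L, F x = x) {x₀ : P} (hx₀ : x₀ ∈ L) {v : V}
    (hv : v ∈ L.direction) : F.linearIsometryEquiv v = v := by
  have h := F.map_vadd x₀ v
  rw [hL _ (AffineSubspace.vadd_mem_of_mem_direction hv hx₀), hL _ hx₀] at h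
  exact (vadd_right_cancel _ h).symm

variable {E : Type*} [NormedAddCommGroup E] [InnerProductSpace ℝ E] (F : E ≃ᵃⁱ[ℝ] E)

theorem inner_sub_self_eq_zero_of_involutive (hF : Function.Involutive F) {u : E}
    (hu : F.linearIsometryEquiv u = u) (x : E) : inner ℝ (F x - x) u = 0 := by
  -- `inner ℝ (F x - x) u` does not depend on `x`, and replacing `x` by `F x` flips its sign.
  have key : ∀ y z, inner ℝ (F y - F z) u = inner ℝ (y - z) u := fun y z => by
    simpa [hu, ← vsub_eq_sub, F.map_vsub] using F.linearIsometryEquiv.inner_map_map (y - z) u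
  have := key x (F x)
  rw [hF x, ← neg_sub (F x) x, inner_neg_left] at this
  linarith

theorem sub_self_mem_of_involutive (W : Submodule ℝ E) [W.HasOrthogonalProjection]
    (hF : Function.Involutive F) (hW : ∀ u ∈ Wᗮ, F.linearIsometryEquiv u = u) (x : E) :
    F x - x ∈ W := by
  rw [← W.orthogonal_orthogonal]
  intro u hu
  rw [real_inner_comm]
  exact F.inner_sub_self_eq_zero_of_involutive hF (hW u hu) x

theorem mapsTo_of_involutive (W : Submodule ℝ E) [W.HasOrthogonalProjection]
    (hF : Function.Involutive F) (hW : ∀ u ∈ Wᗮ, F.linearIsometryEquiv u = u) :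
    MapsTo F W W := fun x hx => by
  simpa using W.add_mem (F.sub_self_mem_of_involutive W hF hW x) hx

theorem starProjection_apply_of_involutive (W : Submodule ℝ E) [W.HasOrthogonalProjection]
    (hF : Function.Involutive F) (hW : ∀ u ∈ Wᗮ, F.linearIsometryEquiv u = u) (x : E) :
    W.starProjection (F x) = F (W.starProjection x) := by
  set π := W.starProjection
  have hperp : x - π x ∈ Wᗮ := W.sub_starProjection_mem_orthogonal x
  have hsplit : F x = F (π x) + (x - π x) := by
    rw [← hW _ hperp, ← vsub_eq_sub, F.map_vsub, vsub_eq_sub, add_sub_cancel]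
  rw [hsplit, map_add, W.starProjection_apply_eq_zero_iff.mpr hperp, add_zero,
    starProjection_eq_self_iff.mpr (F.mapsTo_of_involutive W hF hW (W.starProjection_apply_mem x))]

end AffineIsometryEquiv

theorem isHyperplane_mk'_sup_orthogonal {n : ℕ} (hn : 2 ≤ n) {V W : Submodule ℝ (Euc n)}
    (hVW : V ≤ W) (hV : Module.finrank ℝ V = n - 2) (hW : Module.finrank ℝ W = n - 1) (p : Euc n) :
    IsHyperplane (mk' p (V ⊔ Wᗮ)) := by
  refine ⟨mk'_nonempty _ _, ?_⟩
  have := W.finrank_add_finrank_orthogonal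
  rw [hW, finrank_euclideanSpace_fin] at this
  rw [direction_mk', finrank_sup_orthogonal hVW, hV]
  omega

theorem IsSectionSymmPlane.isSymmPlaneOfIn_inter_image_starProjection {n : ℕ}
    {K : Set (Euc n)} {W : Submodule ℝ (Euc n)} {Γ Δ L : AffineSubspace ℝ (Euc n)}
    (hsym : IsSectionSymmPlane K Δ L) (hΓW : (Γ : Set (Euc n)) ⊆ W)
    (hΔ : ∀ x, x ∈ Δ ↔ W.starProjection x ∈ Γ) (hWL : Wᗮ ≤ L.direction) {x₀ : Euc n}
    (hx₀ : x₀ ∈ L) :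
    IsSymmPlaneOfIn ((Γ : Set (Euc n)) ∩ W.starProjection '' K) Γ (Γ ⊓ L) := by
  obtain ⟨-, f, hf, hff, hfΔ, hfix, hfK⟩ := hsym
  have hinv : Function.Involutive f := congrFun hff
  set F := (IsometryEquiv.mk (Function.Involutive.toPerm f hinv) hf).toRealAffineIsometryEquiv
  have hFf : ⇑F = f := IsometryEquiv.coeFn_toRealAffineIsometryEquiv _
  have hmemL : ∀ x, x ∈ L ↔ x ∈ Δ ∧ f x = x := fun x => by
    rw [← SetLike.mem_coe, ← hfix]; rfl
  have hFW : ∀ u ∈ Wᗮ, F.linearIsometryEquiv u = u := fun u hu =>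
    F.linearIsometryEquiv_apply_eq_self_of_mem_direction
      (fun x hx => hFf ▸ ((hmemL x).1 hx).2) hx₀ (hWL hu)
  have hinvF : Function.Involutive F := hFf.symm ▸ hinv
  have hmemΓ : ∀ x, x ∈ Γ ↔ x ∈ Δ ∧ x ∈ W := fun x => by
    refine ⟨fun hx => ⟨?_, hΓW hx⟩, fun ⟨hxΔ, hxW⟩ => ?_⟩
    · rwa [hΔ, starProjection_eq_self_iff.mpr (hΓW hx)]
    · rwa [hΔ, starProjection_eq_self_iff.mpr hxW] at hxΔ
  have hfΓ : MapsTo f Γ Γ := fun x hx => by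
    have hxΔW := (hmemΓ x).1 hx
    refine (hmemΓ _).2 ⟨?_, hFf ▸ F.mapsTo_of_involutive W hinvF hFW hxΔW.2⟩
    exact (hfΔ ▸ mem_image_of_mem f hxΔW.1 : f x ∈ (Δ : Set (Euc n)))
  refine ⟨inf_le_left, f, hf, hff, hinv.image_eq_self_of_mapsTo hfΓ, ?_,
    hinv.image_eq_self_of_mapsTo ?_⟩
  · ext x
    simp only [mem_ofPred_eq, SetLike.mem_coe, mem_inf_iff, hmemL]
    exact ⟨fun ⟨hx, hfx⟩ => ⟨hx, ((hmemΓ x).1 hx).1, hfx⟩, fun ⟨hx, _, hfx⟩ => ⟨hx, hfx⟩⟩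
  · rintro _ ⟨hy, x, hxK, rfl⟩
    have hfx : f x ∈ (Δ : Set (Euc n)) ∩ K := hfK ▸ mem_image_of_mem f ⟨(hΔ x).2 hy, hxK⟩
    exact ⟨hfΓ hy, f x, hfx.2, hFf ▸ F.starProjection_apply_of_involutive W hinvF hFW x⟩

theorem stmt11_general {n : ℕ} (hn : 4 ≤ n) (K : Set (Euc n)) (H : AffineSubspace ℝ (Euc n)) (p : Euc n)
    (hsec : ∀ P : AffineSubspace ℝ (Euc n), IsHyperplane P → p ∈ P →
      ∃ L : AffineSubspace ℝ (Euc n), Module.finrank ℝ L.direction = n - 2 ∧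
        L.direction ≤ H.direction ∧ IsSectionSymmPlane K P L)
    (W : Submodule ℝ (Euc n)) (hW : Module.finrank ℝ W = n - 1) (hWperp : Wᗮ ≤ H.direction)
    (Γ : AffineSubspace ℝ (Euc n)) (hΓW : (Γ : Set (Euc n)) ⊆ (W : Set (Euc n)))
    (hΓdim : Module.finrank ℝ Γ.direction = n - 2) (hΓnotpar : ¬ Γ.direction ≤ H.direction)
    (hpΓ : (Submodule.orthogonalProjection W p : Euc n) ∈ Γ) :
    ∃ Sig : AffineSubspace ℝ (Euc n), Module.finrank ℝ Sig.direction = n - 3 ∧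
      Sig.direction ≤ W ⊓ H.direction ∧
      IsSymmPlaneOfIn
        ((Γ : Set (Euc n)) ∩ ((fun x => (Submodule.orthogonalProjection W x : Euc n)) '' K))
        Γ Sig := by
  have hΓdir := direction_le_of_subset_submodule hΓW
  set Δ := mk' p (Γ.direction ⊔ Wᗮ)
  have hΔ : ∀ x, x ∈ Δ ↔ W.starProjection x ∈ Γ := fun x => mem_mk'_sup_orthogonal_iff hΓdir hpΓ
  have hΔdir : Δ.direction = Γ.direction ⊔ Wᗮ := direction_mk' _ _
  have hΔhyp : IsHyperplane Δ := isHyperplane_mk'_sup_orthogonal (by omega) hΓdir hΓdim hW p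
  obtain ⟨L, hLdim, hLH, hsym⟩ := hsec Δ hΔhyp (self_mem_mk' _ _)
  have hLΔ := direction_le hsym.1
  have hWL : Wᗮ ≤ L.direction := by
    rw [eq_inf_of_le_of_finrank_le (le_inf hLH hLΔ)
      (fun h => hΓnotpar (hΔdir ▸ le_sup_left |>.trans h)) (by rw [hΔhyp.2, hLdim]; omega)]
    exact le_inf hWperp (hΔdir ▸ le_sup_right)
  obtain ⟨x₀, hx₀⟩ := L.nonempty_iff_ne_bot.2 fun h => by
    rw [h, direction_bot, finrank_bot] at hLdim
    omega
  have hSig := direction_inf_of_mem ((hΔ x₀).1 (hsym.1 hx₀))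
    (starProjection_mem_of_orthogonal_le_direction hWL hx₀)
  have hsup : Γ.direction ⊔ L.direction = Δ.direction :=
    hΔdir ▸ (sup_le le_sup_left (hΔdir ▸ hLΔ)).antisymm (sup_le_sup_left hWL _)
  refine ⟨Γ ⊓ L, ?_, hSig ▸ inf_le_inf hΓdir hLH,
    hsym.isSymmPlaneOfIn_inter_image_starProjection hΓW hΔ hWL hx₀⟩
  have := finrank_sup_add_finrank_inf_eq Γ.direction L.direction
  rw [hsup, hΔhyp.2, hΓdim, hLdim, ← hSig] at this
  omega

/-- Projections onto hyperplanes `W` orthogonal to `H` of a body all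
of whose hyperplane sections through `p` have `(n-2)`-planes of symmetry parallel to
`H` have the corresponding symmetry property in one dimension lower. -/
theorem stmt11 {n : ℕ} (hn : 4 ≤ n) (K : Set (Euc n)) (hK : IsConvexBody K)
    (H : AffineSubspace ℝ (Euc n)) (hH : IsHyperplane H)
    (p : Euc n) (hp : p ∈ interior K)
    (hsec : ∀ P : AffineSubspace ℝ (Euc n), IsHyperplane P → p ∈ P →
      ∃ L : AffineSubspace ℝ (Euc n), Module.finrank ℝ L.direction = n - 2 ∧
        L.direction ≤ H.direction ∧ IsSectionSymmPlane K P L)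
    (W : Submodule ℝ (Euc n)) (hW : Module.finrank ℝ W = n - 1) (hWperp : Wᗮ ≤ H.direction)
    (Γ : AffineSubspace ℝ (Euc n)) (hΓW : (Γ : Set (Euc n)) ⊆ (W : Set (Euc n)))
    (hΓdim : Module.finrank ℝ Γ.direction = n - 2) (hΓnotpar : ¬ Γ.direction ≤ H.direction)
    (hpΓ : (Submodule.orthogonalProjection W p : Euc n) ∈ Γ) :
    ∃ Sig : AffineSubspace ℝ (Euc n), Module.finrank ℝ Sig.direction = n - 3 ∧
      Sig.direction ≤ W ⊓ H.direction ∧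
      IsSymmPlaneOfIn
        ((Γ : Set (Euc n)) ∩ ((fun x => (Submodule.orthogonalProjection W x : Euc n)) '' K))
        Γ Sig :=
  stmt11_general hn K H p hsec W hW hWperp Γ hΓW hΓdim hΓnotpar hpΓ
end
end

section
/- Let K ⊂ ℝ^3 be a convex body. If for every direction u in a fixed plane H the shadow boundary S∂(K,u) lies in a plane containing a fixed chord [α,β] ⊥ H and orthogonal to u, then every section of K by a plane parallel to H is a disc centered on the line through [α,β]. -/
noncomputable section

open Metric Set MeasureTheory

open scoped RealInnerProductSpace

private lemma chain_le (F : ℝ → ℝ) (hpos : ∀ θ, 0 ≤ F θ)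
    (hstar : ∀ θ θ', F θ' * Real.cos (θ' - θ) ≤ F θ) (θ₁ θ₂ : ℝ) : F θ₂ ≤ F θ₁ := by
  have step : ∀ s : ℝ, 0 ≤ Real.cos s → ∀ k : ℕ,
      F (θ₁ + (k : ℝ) * s) * (Real.cos s) ^ k ≤ F θ₁ := by
    intro s hs k
    induction k with
    | zero => simp
    | succ k ih =>
      have e1 : (θ₁ + ((k : ℝ) + 1) * s) - (θ₁ + (k : ℝ) * s) = s := by ring
      have h1 := hstar (θ₁ + (k : ℝ) * s) (θ₁ + ((k : ℝ) + 1) * s)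
      rw [e1] at h1
      have h2 := mul_le_mul_of_nonneg_right h1 (pow_nonneg hs k)
      push_cast
      calc F (θ₁ + ((k : ℝ) + 1) * s) * Real.cos s ^ (k + 1)
          = F (θ₁ + ((k : ℝ) + 1) * s) * Real.cos s * Real.cos s ^ k := by ring
        _ ≤ F (θ₁ + (k : ℝ) * s) * Real.cos s ^ k := h2
        _ ≤ F θ₁ := ih
  refine le_of_forall_pos_le_add fun ε hε => ?_
  set d := θ₂ - θ₁ with hd
  obtain ⟨N, hN⟩ := exists_nat_gt (max |d| (F θ₂ * d ^ 2 / (2 * ε)))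
  have hNd : |d| < (N : ℝ) := lt_of_le_of_lt (le_max_left _ _) hN
  have hNpos : (0 : ℝ) < N := lt_of_le_of_lt (abs_nonneg d) hNd
  set s := d / (N : ℝ) with hs
  have habs : |s| < 1 := by
    rw [hs, abs_div, abs_of_pos hNpos, div_lt_one hNpos]; exact hNd
  have h1 := abs_lt.mp habs
  have hs2 : s ^ 2 < 1 := by nlinarith [abs_nonneg s, sq_abs s]
  have hcos0 : 0 ≤ Real.cos s := by
    apply Real.cos_nonneg_of_mem_Icc
    have := Real.pi_gt_three
    constructor
    · linarith [h1.1]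
    · linarith [h1.2]
  have hbound : 1 - d ^ 2 / (2 * N) ≤ Real.cos s ^ N := by
    have hb1 : 1 - s ^ 2 / 2 ≤ Real.cos s := Real.one_sub_sq_div_two_le_cos
    have hb2 : (0 : ℝ) ≤ 1 - s ^ 2 / 2 := by nlinarith
    have hb3 : (1 - s ^ 2 / 2) ^ N ≤ Real.cos s ^ N := pow_le_pow_left₀ hb2 hb1 N
    have hb4 : 1 + (N : ℝ) * (-(s ^ 2 / 2)) ≤ (1 + -(s ^ 2 / 2)) ^ N :=
      one_add_mul_le_pow (by nlinarith) N
    have hb5 : 1 - d ^ 2 / (2 * N) = 1 + (N : ℝ) * (-(s ^ 2 / 2)) := by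
      rw [hs]; field_simp; ring
    rw [hb5]
    calc 1 + (N : ℝ) * (-(s ^ 2 / 2)) ≤ (1 + -(s ^ 2 / 2)) ^ N := hb4
      _ = (1 - s ^ 2 / 2) ^ N := by ring_nf
      _ ≤ Real.cos s ^ N := hb3
  have hchain := step s hcos0 N
  have hNs : θ₁ + (N : ℝ) * s = θ₂ := by
    rw [hs]; field_simp; rw [hd]; ring
  rw [hNs] at hchain
  have hkey : F θ₂ * (1 - d ^ 2 / (2 * N)) ≤ F θ₁ :=
    le_trans (mul_le_mul_of_nonneg_left hbound (hpos θ₂)) hchain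
  have hεN : F θ₂ * d ^ 2 / (2 * N) ≤ ε := by
    have h2 : F θ₂ * d ^ 2 / (2 * ε) < N := lt_of_le_of_lt (le_max_right _ _) hN
    rw [div_lt_iff₀ (by positivity)] at h2
    rw [div_le_iff₀ (by positivity)]
    nlinarith
  have expand : F θ₂ * (1 - d ^ 2 / (2 * N)) = F θ₂ - F θ₂ * d ^ 2 / (2 * N) := by ring
  rw [expand] at hkey
  linarith

private lemma exists_polar (a b : ℝ) :
    ∃ θ : ℝ, a = Real.sqrt (a ^ 2 + b ^ 2) * Real.cos θ ∧
      b = Real.sqrt (a ^ 2 + b ^ 2) * Real.sin θ := by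
  rcases eq_or_ne (a ^ 2 + b ^ 2) 0 with h | h
  · have ha : a = 0 := by nlinarith [sq_nonneg a, sq_nonneg b]
    have hb : b = 0 := by nlinarith [sq_nonneg a, sq_nonneg b]
    exact ⟨0, by simp [ha, hb]⟩
  · set c : ℂ := ⟨a, b⟩ with hc
    have hc0 : c ≠ 0 := by
      intro h0
      rw [Complex.ext_iff] at h0
      simp [hc] at h0
      exact h (by rw [h0.1, h0.2]; ring)
    have habs : ‖c‖ = Real.sqrt (a ^ 2 + b ^ 2) := by
      rw [Complex.norm_def, Complex.normSq_mk]; ring_nf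
    have h1 := Complex.cos_arg hc0
    have h2 := Complex.sin_arg c
    have habs0 : ‖c‖ ≠ 0 := by
      rw [habs]
      intro hh
      exact h (by nlinarith [Real.sq_sqrt (by positivity : (0:ℝ) ≤ a ^ 2 + b ^ 2),
        Real.sqrt_nonneg (a ^ 2 + b ^ 2)] )
    refine ⟨c.arg, ?_, ?_⟩
    · rw [h1, ← habs]; field_simp [hc]; rfl
    · rw [h2, ← habs]; field_simp [hc]; rfl


set_option maxHeartbeats 2000000 in
/-- If for every direction `u` parallel to `H` the shadow boundary of
`K` lies in a plane containing the fixed chord `[α,β] ⊥ H` and orthogonal to `u`,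
then every section of `K` by a plane parallel to `H` meeting the interior is a disc
centered on the line through `[α,β]`. -/
theorem stmt19 (K : Set (Euc 3)) (hK : IsConvexBody K)
    (H : AffineSubspace ℝ (Euc 3)) (hH : IsHyperplane H)
    (α β : Euc 3) (hα : α ∈ frontier K) (hβ : β ∈ frontier K) (hαβ : α ≠ β)
    (hperp : β - α ∈ H.directionᗮ)
    (hsb : ∀ u : Euc 3, u ≠ 0 → u ∈ H.direction →
      ∃ Δ : AffineSubspace ℝ (Euc 3), Module.finrank ℝ Δ.direction = 2 ∧
        α ∈ Δ ∧ β ∈ Δ ∧ Δ.direction ≤ (ℝ ∙ u)ᗮ ∧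
        shadowBoundary K (ℝ ∙ u) ⊆ (Δ : Set (Euc 3))) :
    ∀ P : AffineSubspace ℝ (Euc 3), P.direction = H.direction →
      ((P : Set (Euc 3)) ∩ interior K).Nonempty →
      ∃ z : Euc 3, z ∈ affineSpan ℝ ({α, β} : Set (Euc 3)) ∧ ∃ r : ℝ, 0 < r ∧
        (P : Set (Euc 3)) ∩ K = closedBall z r ∩ (P : Set (Euc 3)) := by
  intro P hPdir hPint
  obtain ⟨p, hpP, hpK⟩ := hPint
  set W := H.direction with hWdef
  have hdim3 : Module.finrank ℝ (Euc 3) = 3 := by simp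
  have hW2 : Module.finrank ℝ W = 2 := hH.2
  set n₀ : Euc 3 := β - α with hn₀def
  have hn₀ : n₀ ≠ 0 := sub_ne_zero.mpr (Ne.symm hαβ)
  -- W is the orthogonal complement of the span of n₀
  have hWeq : W = (ℝ ∙ n₀)ᗮ := by
    have hle : W ≤ (ℝ ∙ n₀)ᗮ := by
      intro v hv
      rw [Submodule.mem_orthogonal]
      intro x hx
      obtain ⟨s, rfl⟩ := Submodule.mem_span_singleton.mp hx
      have h0 : ⟪v, n₀⟫ = 0 := (Submodule.mem_orthogonal W n₀).mp hperp v hv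
      rw [real_inner_smul_left, real_inner_comm, h0, mul_zero]
    apply Submodule.eq_of_le_of_finrank_eq hle
    have h1 : Module.finrank ℝ (ℝ ∙ n₀) = 1 := finrank_span_singleton hn₀
    have h2 := Submodule.finrank_add_finrank_orthogonal (ℝ ∙ n₀) (𝕜 := ℝ)
    rw [hdim3] at h2
    omega
  -- the center z : intersection of P with the line through α and β
  set c : ℝ := ⟪p - α, n₀⟫ / ‖n₀‖ ^ 2 with hcdef
  set z : Euc 3 := α + c • n₀ with hzdef
  have hzspan : z ∈ affineSpan ℝ ({α, β} : Set (Euc 3)) := by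
    have h := AffineMap.lineMap_mem_affineSpan_pair c α β
    have heq : AffineMap.lineMap α β c = z := by
      rw [AffineMap.lineMap_apply_module, hzdef, hn₀def]
      rw [smul_sub, sub_smul, one_smul]
      abel
    rwa [heq] at h
  have hzP : z ∈ P := by
    have hmem : z - p ∈ W := by
      rw [hWeq, Submodule.mem_orthogonal]
      intro x hx
      obtain ⟨s, rfl⟩ := Submodule.mem_span_singleton.mp hx
      have key : ⟪n₀, z - p⟫ = 0 := by
        have hzp : z - p = (α - p) + c • n₀ := by rw [hzdef]; abel
        rw [hzp, inner_add_right, real_inner_smul_right, hcdef,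
          real_inner_self_eq_norm_sq]
        have hne : ‖n₀‖ ^ 2 ≠ 0 := pow_ne_zero 2 (norm_ne_zero_iff.mpr hn₀)
        rw [div_mul_cancel₀ _ hne, ← real_inner_comm (p - α) n₀, ← inner_add_right]
        have h0 : (α - p) + (p - α) = 0 := by abel
        rw [h0, inner_zero_right]
      rw [real_inner_smul_left, key, mul_zero]
    have := AffineSubspace.vadd_mem_of_mem_direction (hPdir ▸ hmem) hpP
    simpa [vadd_eq_add, sub_add_cancel] using this
  -- orthonormal basis of W
  obtain ⟨w, hwW, hw_orth, hw_repr⟩ :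
      ∃ w : Fin 2 → Euc 3, (∀ i, w i ∈ W) ∧
        (∀ i j, ⟪w i, w j⟫ = if i = j then (1:ℝ) else 0) ∧
        (∀ v : Euc 3, v ∈ W → v = ⟪w 0, v⟫ • w 0 + ⟪w 1, v⟫ • w 1) := by
    let b := (stdOrthonormalBasis ℝ W).reindex (finCongr hW2)
    refine ⟨fun i => (b i : Euc 3), fun i => (b i).2, ?_, ?_⟩
    · intro i j
      have h := b.orthonormal
      rw [orthonormal_iff_ite] at h
      have := h i j
      rwa [Submodule.coe_inner] at this
    · intro v hv
      have h := congrArg (Subtype.val) (b.sum_repr ⟨v, hv⟩)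
      rw [Fin.sum_univ_two] at h
      have h0 := b.repr_apply_apply ⟨v, hv⟩ 0
      have h1 := b.repr_apply_apply ⟨v, hv⟩ 1
      rw [h0, h1] at h
      simp only [Submodule.coe_add, Submodule.coe_smul, Submodule.coe_inner] at h
      exact h.symm
  -- the circle of unit directions in W
  set e : ℝ → Euc 3 := fun θ => Real.cos θ • w 0 + Real.sin θ • w 1 with hedef
  have heW : ∀ θ, e θ ∈ W := fun θ =>
    W.add_mem (W.smul_mem _ (hwW 0)) (W.smul_mem _ (hwW 1))
  have he_inner : ∀ θ θ', ⟪e θ, e θ'⟫ = Real.cos (θ - θ') := by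
    intro θ θ'
    have h00 : ⟪w 0, w 0⟫ = (1:ℝ) := by rw [hw_orth]; norm_num
    have h01 : ⟪w 0, w 1⟫ = (0:ℝ) := by rw [hw_orth]; norm_num
    have h10 : ⟪w 1, w 0⟫ = (0:ℝ) := by rw [hw_orth]; norm_num
    have h11 : ⟪w 1, w 1⟫ = (1:ℝ) := by rw [hw_orth]; norm_num
    simp only [hedef, inner_add_left, inner_add_right, real_inner_smul_left,
      real_inner_smul_right, h00, h01, h10, h11, Real.cos_sub]
    ring
  have he_ne : ∀ θ, e θ ≠ 0 := by
    intro θ h0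
    have := he_inner θ θ
    rw [h0, inner_zero_left, sub_self, Real.cos_zero] at this
    norm_num at this
  have he_norm : ∀ θ, ‖e θ‖ = 1 := by
    intro θ
    have h := he_inner θ θ
    rw [sub_self, Real.cos_zero, real_inner_self_eq_norm_sq] at h
    nlinarith [norm_nonneg (e θ)]
  -- the section M
  set M : Set (Euc 3) := (P : Set (Euc 3)) ∩ K with hMdef
  have hMcpt : IsCompact M := hK.1.inter_left (P.closed_of_finiteDimensional)
  have hMne : M.Nonempty := ⟨p, hpP, interior_subset hpK⟩
  have hMconv : Convex ℝ M := (AffineSubspace.convex P).inter hK.2.1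
  -- key: for each direction θ, the maximizer of ⟨·-z, e θ⟩ over M lies on the ray z + ℝ e θ
  have key : ∀ θ : ℝ, ∃ cc : ℝ, (z + cc • e θ ∈ M) ∧
      ∀ y ∈ M, ⟪y - z, e θ⟫ ≤ cc := by
    intro θ
    set u : Euc 3 := e (θ + Real.pi / 2) with hudef
    have hue : ⟪u, e θ⟫ = 0 := by
      rw [hudef, he_inner]
      have : θ + Real.pi / 2 - θ = Real.pi / 2 := by ring
      rw [this, Real.cos_pi_div_two]
    have hu0 : u ≠ 0 := he_ne _
    have hcont : ContinuousOn (fun y : Euc 3 => ⟪y - z, e θ⟫) M :=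
      ((continuous_id.sub continuous_const).inner continuous_const).continuousOn
    obtain ⟨y₀, hy₀M, hy₀max⟩ := hMcpt.exists_isMaxOn hMne hcont
    -- y₀ is on the shadow boundary in direction u
    have hy₀sb : y₀ ∈ shadowBoundary K (ℝ ∙ u) := by
      rw [shadowBoundary]
      apply Set.mem_iUnion₂.mpr
      refine ⟨AffineSubspace.mk' y₀ (ℝ ∙ u),
        ⟨AffineSubspace.direction_mk' _ _,
         ⟨y₀, AffineSubspace.self_mem_mk' _ _, hy₀M.2⟩, ?_⟩,
        AffineSubspace.self_mem_mk' _ _, hy₀M.2⟩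
      rw [Set.eq_empty_iff_forall_notMem]
      rintro q ⟨hql, hqint⟩
      obtain ⟨s, hsq⟩ := Submodule.mem_span_singleton.mp
        (AffineSubspace.mem_mk'.mp hql)
      rw [vsub_eq_sub] at hsq
      obtain ⟨δ, hδ, hball⟩ := Metric.isOpen_iff.mp isOpen_interior q hqint
      set q' : Euc 3 := q + (δ / 2) • e θ with hq'def
      have hq'K : q' ∈ K := interior_subset (hball (by
        rw [mem_ball, dist_eq_norm, hq'def]
        have : q + (δ / 2) • e θ - q = (δ / 2) • e θ := by abel
        rw [this, norm_smul, Real.norm_eq_abs, abs_of_pos (by linarith), he_norm]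
        linarith))
      have hqP : q ∈ P := by
        have hq : q = (s • u) +ᵥ y₀ := by rw [vadd_eq_add, hsq]; abel
        rw [hq]
        exact AffineSubspace.vadd_mem_of_mem_direction
          (hPdir ▸ (W.smul_mem s (heW _))) hy₀M.1
      have hq'P : q' ∈ P := by
        have hq' : q' = ((δ / 2) • e θ) +ᵥ q := by rw [vadd_eq_add, hq'def]; abel
        rw [hq']
        exact AffineSubspace.vadd_mem_of_mem_direction
          (hPdir ▸ (W.smul_mem _ (heW θ))) hqP
      have hle := hy₀max ⟨hq'P, hq'K⟩
      simp only [Set.mem_setOf_eq] at hle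
      -- compute the inner products
      have hqe : ⟪q - z, e θ⟫ = ⟪y₀ - z, e θ⟫ := by
        have : q - z = (q - y₀) + (y₀ - z) := by abel
        rw [this, inner_add_left, ← hsq, real_inner_smul_left, hue, mul_zero, zero_add]
      have hq'e : ⟪q' - z, e θ⟫ = ⟪y₀ - z, e θ⟫ + δ / 2 := by
        have : q' - z = (q - z) + (δ / 2) • e θ := by rw [hq'def]; abel
        rw [this, inner_add_left, real_inner_smul_left, he_inner, sub_self,
          Real.cos_zero, mul_one, hqe]
      rw [hq'e] at hle
      linarith
    -- apply the shadow boundary hypothesis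
    obtain ⟨Δ, hΔ2, hΔα, hΔβ, hΔdir, hΔsub⟩ := hsb u hu0 (heW _)
    have hy₀Δ : y₀ ∈ Δ := hΔsub hy₀sb
    have hzΔ : z ∈ Δ := by
      have h := Δ.smul_vsub_vadd_mem c hΔβ hΔα hΔα
      have heqz : c • (β -ᵥ α) +ᵥ α = z := by
        rw [vsub_eq_sub, vadd_eq_add, hzdef, hn₀def]; abel
      rwa [heqz] at h
    have hv₀u : ⟪u, y₀ - z⟫ = 0 := by
      have h1 : y₀ - z ∈ Δ.direction := by
        have := AffineSubspace.vsub_mem_direction hy₀Δ hzΔ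
        rwa [vsub_eq_sub] at this
      exact (Submodule.mem_orthogonal _ _).mp (hΔdir h1) u
        (Submodule.mem_span_singleton_self u)
    have hv₀W : y₀ - z ∈ W := by
      have := AffineSubspace.vsub_mem_direction hy₀M.1 hzP
      rwa [vsub_eq_sub, hPdir] at this
    -- decompose y₀ - z in the basis
    set a : ℝ := ⟪w 0, y₀ - z⟫ with hadef
    set b : ℝ := ⟪w 1, y₀ - z⟫ with hbdef
    have hv : y₀ - z = a • w 0 + b • w 1 := hw_repr _ hv₀W
    have h00 : ⟪w 0, w 0⟫ = (1:ℝ) := by rw [hw_orth]; norm_num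
    have h01 : ⟪w 0, w 1⟫ = (0:ℝ) := by rw [hw_orth]; norm_num
    have h10 : ⟪w 1, w 0⟫ = (0:ℝ) := by rw [hw_orth]; norm_num
    have h11 : ⟪w 1, w 1⟫ = (1:ℝ) := by rw [hw_orth]; norm_num
    have hew0 : ∀ ψ : ℝ, ⟪e ψ, w 0⟫ = Real.cos ψ := by
      intro ψ
      simp only [hedef, inner_add_left, real_inner_smul_left, h00, h01, h10, h11]
      ring
    have hew1 : ∀ ψ : ℝ, ⟪e ψ, w 1⟫ = Real.sin ψ := by
      intro ψ
      simp only [hedef, inner_add_left, real_inner_smul_left, h00, h01, h10, h11]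
      ring
    have hcoords : -Real.sin θ * a + Real.cos θ * b = 0 := by
      have h := hv₀u
      rw [hv, inner_add_right, real_inner_smul_right, real_inner_smul_right, hudef,
        hew0, hew1, Real.cos_add, Real.sin_add, Real.cos_pi_div_two,
        Real.sin_pi_div_two] at h
      ring_nf at h ⊢
      linarith [h]
    have hsc : Real.sin θ ^ 2 + Real.cos θ ^ 2 = 1 := Real.sin_sq_add_cos_sq θ
    set cc : ℝ := a * Real.cos θ + b * Real.sin θ with hccdef
    have hca : Real.cos θ * (a * Real.cos θ + b * Real.sin θ) = a := by
      linear_combination Real.sin θ * hcoords + a * hsc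
    have hcb : Real.sin θ * (a * Real.cos θ + b * Real.sin θ) = b := by
      linear_combination -Real.cos θ * hcoords + b * hsc
    have hveq : y₀ - z = cc • e θ := by
      rw [hv]
      simp only [hedef, smul_add, smul_smul]
      rw [show cc * Real.cos θ = a from by rw [hccdef, mul_comm]; exact hca,
        show cc * Real.sin θ = b from by rw [hccdef, mul_comm]; exact hcb]
    refine ⟨cc, ?_, fun y hy => ?_⟩
    · have : z + cc • e θ = y₀ := by rw [← hveq]; abel
      rwa [this]
    · have h1 := hy₀max hy
      simp only at h1
      calc ⟪y - z, e θ⟫ ≤ ⟪y₀ - z, e θ⟫ := h1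
        _ = cc := by
            rw [hveq, real_inner_smul_left, he_inner, sub_self, Real.cos_zero, mul_one]
  -- the support/radial function
  choose Hf hA1 hA2 using key
  have hstar : ∀ θ θ', Hf θ' * Real.cos (θ' - θ) ≤ Hf θ := by
    intro θ θ'
    have h := hA2 θ _ (hA1 θ')
    have heq : ⟪z + Hf θ' • e θ' - z, e θ⟫ = Hf θ' * Real.cos (θ' - θ) := by
      have h0 : z + Hf θ' • e θ' - z = Hf θ' • e θ' := by abel
      rw [h0, real_inner_smul_left, he_inner]
    rwa [heq] at h
  have hpos : ∀ θ, 0 ≤ Hf θ := by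
    intro θ
    have h := hstar θ (θ + Real.pi / 2)
    rw [show θ + Real.pi / 2 - θ = Real.pi / 2 by ring, Real.cos_pi_div_two,
      mul_zero] at h
    exact h
  have hconst : ∀ θ θ', Hf θ = Hf θ' :=
    fun θ θ' => le_antisymm (chain_le Hf hpos hstar θ' θ) (chain_le Hf hpos hstar θ θ')
  set r : ℝ := Hf 0 with hrdef
  -- e π = - e 0
  have heπ : e Real.pi = -(e 0) := by
    simp [hedef, Real.cos_pi, Real.sin_pi]
  -- positivity of r
  obtain ⟨ε, hε, hball⟩ := Metric.isOpen_iff.mp isOpen_interior p hpK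
  have hpm : ∀ t : ℝ, |t| < ε → p + t • e 0 ∈ M := by
    intro t ht
    constructor
    · have : p + t • e 0 = (t • e 0) +ᵥ p := by rw [vadd_eq_add]; abel
      rw [this]
      exact AffineSubspace.vadd_mem_of_mem_direction
        (hPdir ▸ (W.smul_mem _ (heW 0))) hpP
    · refine interior_subset (hball ?_)
      rw [mem_ball, dist_eq_norm, show p + t • e 0 - p = t • e 0 by abel,
        norm_smul, Real.norm_eq_abs, he_norm, mul_one]
      exact ht
  have hrpos : 0 < r := by
    have h1 := hA2 0 _ (hpm (ε / 2) (by rw [abs_of_pos (by linarith)]; linarith))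
    have h2 := hA2 Real.pi _ (hpm (-(ε / 2)) (by rw [abs_neg, abs_of_pos (by linarith)]; linarith))
    have he00 : ⟪e 0, e 0⟫ = 1 := by rw [he_inner, sub_self, Real.cos_zero]
    have hc1 : ⟪p + (ε / 2) • e 0 - z, e 0⟫ = ⟪p - z, e 0⟫ + ε / 2 := by
      rw [show p + (ε / 2) • e 0 - z = (p - z) + (ε / 2) • e 0 by abel,
        inner_add_left, real_inner_smul_left, he00, mul_one]
    have hc2 : ⟪p + (-(ε / 2)) • e 0 - z, e Real.pi⟫ = -⟪p - z, e 0⟫ + ε / 2 := by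
      rw [heπ, inner_neg_right,
        show p + (-(ε / 2)) • e 0 - z = (p - z) + (-(ε / 2)) • e 0 by abel,
        inner_add_left, real_inner_smul_left, he00, mul_one]
      ring
    rw [hc1] at h1
    rw [hc2] at h2
    have hπ0 : Hf Real.pi = r := (hconst Real.pi 0)
    rw [hπ0] at h2
    linarith
  -- polar representation of nonzero vectors of W
  have hpolar : ∀ v : Euc 3, v ∈ W → v ≠ 0 → ∃ θ : ℝ, v = ‖v‖ • e θ := by
    intro v hvW hv0
    set a : ℝ := ⟪w 0, v⟫ with hadef
    set b : ℝ := ⟪w 1, v⟫ with hbdef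
    have hv : v = a • w 0 + b • w 1 := hw_repr _ hvW
    have h00 : ⟪w 0, w 0⟫ = (1:ℝ) := by rw [hw_orth]; norm_num
    have h01 : ⟪w 0, w 1⟫ = (0:ℝ) := by rw [hw_orth]; norm_num
    have h10 : ⟪w 1, w 0⟫ = (0:ℝ) := by rw [hw_orth]; norm_num
    have h11 : ⟪w 1, w 1⟫ = (1:ℝ) := by rw [hw_orth]; norm_num
    have hnorm : ‖v‖ = Real.sqrt (a ^ 2 + b ^ 2) := by
      have hvv : ⟪v, v⟫ = a ^ 2 + b ^ 2 := by
        nth_rewrite 1 [hv]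
        nth_rewrite 1 [hv]
        simp only [inner_add_left, inner_add_right, real_inner_smul_left,
          real_inner_smul_right, h00, h01, h10, h11]
        ring
      have hvn : ‖v‖ ^ 2 = a ^ 2 + b ^ 2 := by
        rw [← real_inner_self_eq_norm_sq]; exact hvv
      rw [← hvn, Real.sqrt_sq (norm_nonneg v)]
    obtain ⟨θ, hθ1, hθ2⟩ := exists_polar a b
    refine ⟨θ, ?_⟩
    rw [← hnorm] at hθ1 hθ2
    conv_lhs => rw [hv]
    rw [hθ1, hθ2]
    simp only [hedef]
    module
  -- z is in M
  have hzM : z ∈ M := by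
    have h0 := hA1 0
    have hπ := hA1 Real.pi
    rw [hconst Real.pi 0] at hπ
    have hcomb := hMconv h0 hπ (by norm_num : (0:ℝ) ≤ 1/2) (by norm_num : (0:ℝ) ≤ 1/2)
      (by norm_num : (1:ℝ)/2 + 1/2 = 1)
    have : (1/2 : ℝ) • (z + Hf 0 • e 0) + (1/2 : ℝ) • (z + Hf 0 • e Real.pi) = z := by
      rw [heπ]
      module
    rwa [this] at hcomb
  refine ⟨z, hzspan, r, hrpos, ?_⟩
  ext y
  constructor
  · rintro ⟨hyP, hyK⟩
    refine ⟨?_, hyP⟩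
    rw [mem_closedBall, dist_eq_norm]
    rcases eq_or_ne y z with rfl | hyz
    · simpa using hrpos.le
    · have hvW : y - z ∈ W := by
        have := AffineSubspace.vsub_mem_direction hyP hzP
        rwa [vsub_eq_sub, hPdir] at this
      obtain ⟨θ, hθ⟩ := hpolar (y - z) hvW (sub_ne_zero.mpr hyz)
      have h := hA2 θ y ⟨hyP, hyK⟩
      have hin : ⟪y - z, e θ⟫ = ‖y - z‖ := by
        nth_rewrite 1 [hθ]
        rw [real_inner_smul_left, he_inner, sub_self, Real.cos_zero, mul_one]
      rw [hin] at h
      calc ‖y - z‖ ≤ Hf θ := h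
        _ = r := hconst θ 0
  · rintro ⟨hyB, hyP⟩
    refine ⟨hyP, ?_⟩
    rw [mem_closedBall, dist_eq_norm] at hyB
    rcases eq_or_ne y z with rfl | hyz
    · exact hzM.2
    · have hvW : y - z ∈ W := by
        have := AffineSubspace.vsub_mem_direction hyP hzP
        rwa [vsub_eq_sub, hPdir] at this
      obtain ⟨θ, hθ⟩ := hpolar (y - z) hvW (sub_ne_zero.mpr hyz)
      set t : ℝ := ‖y - z‖ with htdef
      have ht0 : 0 < t := norm_pos_iff.mpr (sub_ne_zero.mpr hyz)
      have htr : t ≤ r := hyB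
      have hx := hA1 θ
      rw [hconst θ 0] at hx
      have hcomb := hMconv hzM hx (sub_nonneg.mpr ((div_le_one hrpos).mpr htr))
        (by positivity : (0:ℝ) ≤ t / r) (by field_simp; ring)
      have heq : (1 - t / r) • z + (t / r) • (z + Hf 0 • e θ) = y := by
        have hy : y = z + t • e θ := by rw [← hθ]; abel
        rw [hy, ← hrdef]
        simp only [smul_add, smul_smul, sub_smul, one_smul]
        rw [show t / r * r = t from by field_simp]
        abel
      rw [heq] at hcomb
      exact hcomb.2
end
end
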